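/- Fix an integer l ≥ 1, adopt the double-factorial convention (−1)!! = 0!! = 1, and let h̃ : ℝ → ℝ be a smooth function. Define φ : ℝ² → ℝ by φ(x,s) := h̃(x)·s − [(2l)!!/(2l−1)!!]·[Σ_{i=1}^{l} ((2l−2i−1)!!/(2l−2i+2)!!)·x^{i−1}·(x−s²)^{l−i+1} − x^{l}]. Then φ satisfies ∂₂₂φ − 2(∂₁φ − s·∂₁₂φ) = 0 at every (x,s) ∈ ℝ². Moreover, φ − s·∂₂φ = (x − s²)^{l}. -/

import Mathlib

open Set

noncomputable def d1 (φ : ℝ → ℝ → ℝ) (x s : ℝ) : ℝ := deriv (fun t => φ t s) x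

noncomputable def d2 (φ : ℝ → ℝ → ℝ) (x s : ℝ) : ℝ := deriv (fun t => φ x t) s

def dfac : ℕ → ℕ
  | 0 => 1
  | 1 => 1
  | n + 2 => (n + 2) * dfac n

lemma dfac_pos (n : ℕ) : 0 < dfac n := by
  induction n using dfac.induct <;> simp [dfac] <;> positivity

lemma dfac_ne (n : ℕ) : (dfac n : ℝ) ≠ 0 := by
  exact_mod_cast (dfac_pos n).ne'

lemma dfac_step (j : ℕ) : (dfac (2*j+1) : ℝ) = (2*j+1) * dfac (2*j-1) := by
  cases j with
  | zero => simp [dfac]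
  | succ j =>
      have h1 : 2*(j+1)+1 = (2*j+1)+2 := by omega
      have h2 : 2*(j+1)-1 = 2*j+1 := by omega
      rw [h1, h2]
      show ((((2*j+1)+2) * dfac (2*j+1) : ℕ) : ℝ) = _
      push_cast; ring

noncomputable def Bc (j : ℕ) : ℝ := (dfac (2*j-1) : ℝ) / dfac (2*j+2)

noncomputable def Cc (l : ℕ) : ℝ := (dfac (2*l) : ℝ) / dfac (2*l-1)

noncomputable def Ai (l i : ℕ) : ℝ := (dfac (2*l-2*i-1) : ℝ) / dfac (2*l-2*i+2)

lemma Bc_rec (j : ℕ) : (2*(j:ℝ)+1) * Bc j = 2*((j:ℝ)+2) * Bc (j+1) := by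
  unfold Bc
  have h1 : 2*(j+1)+2 = (2*j+2)+2 := by omega
  have h2 : 2*(j+1)-1 = 2*j+1 := by omega
  rw [h1, h2, show dfac ((2*j+2)+2) = ((2*j+2)+2) * dfac (2*j+2) from rfl, dfac_step j]
  have := dfac_ne (2*j+2)
  push_cast
  field_simp
  ring

lemma key_sum (l : ℕ) (x u : ℝ) :
    ∑ j ∈ Finset.range l,
      (Bc j * (-(2*(j:ℝ)+1) * x^(l-1-j) * u^(j+1) + 2*((j:ℝ)+1) * x^(l-j) * u^j))
      = x^l - 2*((l:ℝ)+1)*Bc l * u^l := by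
  have h := Finset.sum_range_sub' (f := fun j => 2*((j:ℝ)+1)*Bc j * x^(l-j) * u^j) l
  have hB0 : Bc 0 = 1/2 := by norm_num [Bc, dfac]
  push_cast at h
  calc ∑ j ∈ Finset.range l,
      (Bc j * (-(2*(j:ℝ)+1) * x^(l-1-j) * u^(j+1) + 2*((j:ℝ)+1) * x^(l-j) * u^j))
      = ∑ j ∈ Finset.range l,
        (2*((j:ℝ)+1)*Bc j * x^(l-j) * u^j - 2*((j:ℝ)+1+1)*Bc (j+1) * x^(l-(j+1)) * u^(j+1)) := by
        refine Finset.sum_congr rfl fun j hj => ?_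
        have hrec := Bc_rec j
        have he : l - (j+1) = l - 1 - j := by omega
        rw [he]
        linear_combination (-(x^(l-1-j) * u^(j+1))) * hrec
    _ = 2*(0+1)*Bc 0 * x^(l-0) * u^0 - 2*((l:ℝ)+1)*Bc l * x^(l-l) * u^l := h
    _ = x^l - 2*((l:ℝ)+1)*Bc l * u^l := by
        simp [hB0, Nat.sub_self]

lemma sum_Icc_reflect (l : ℕ) (f : ℕ → ℝ) :
    ∑ i ∈ Finset.Icc 1 l, f i = ∑ j ∈ Finset.range l, f (l - j) := by
  rw [← Finset.Ico_add_one_right_eq_Icc, Finset.sum_Ico_eq_sum_range]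
  simp only [show l + 1 - 1 = l from rfl]
  rw [← Finset.sum_range_reflect (fun j => f (1 + j)) l]
  refine Finset.sum_congr rfl fun j hj => ?_
  have : 1 + (l - 1 - j) = l - j := by
    simp at hj; omega
  rw [this]

lemma CBl (l : ℕ) : Cc l * (2*((l:ℝ)+1) * Bc l) = 1 := by
  unfold Cc Bc
  rw [show dfac (2*l+2) = (2*l+2) * dfac (2*l) from rfl]
  have h1 := dfac_ne (2*l)
  have h2 := dfac_ne (2*l-1)
  push_cast
  field_simp

lemma key_identity (l : ℕ) (x u : ℝ) :
    Cc l * (x^l - ∑ i ∈ Finset.Icc 1 l, Ai l i * x^(i-1) * u^(l-i+1))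
      - (x - u) * ((∑ i ∈ Finset.Icc 1 l,
          Cc l * Ai l i * x^(i-1) * (2*((l-i+1 : ℕ):ℝ)) * u^(l-i)))
      = u^l := by
  rw [sum_Icc_reflect l (fun i => Ai l i * x^(i-1) * u^(l-i+1)),
      sum_Icc_reflect l (fun i => Cc l * Ai l i * x^(i-1) * (2*((l-i+1 : ℕ):ℝ)) * u^(l-i))]
  have hAB : ∀ j, j < l → Ai l (l - j) = Bc j := by
    intro j hj
    unfold Ai Bc
    have e1 : 2*l-2*(l-j)-1 = 2*j-1 := by omega
    have e2 : 2*l-2*(l-j)+2 = 2*j+2 := by omega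
    rw [e1, e2]
  have h1 : ∑ j ∈ Finset.range l, Ai l (l-j) * x^((l-j)-1) * u^(l-(l-j)+1)
      = ∑ j ∈ Finset.range l, Bc j * x^(l-1-j) * u^(j+1) := by
    refine Finset.sum_congr rfl fun j hj => ?_
    rw [Finset.mem_range] at hj
    rw [hAB j hj, show (l-j)-1 = l-1-j by omega, show l-(l-j)+1 = j+1 by omega]
  have h2 : ∑ j ∈ Finset.range l, Cc l * Ai l (l-j) * x^((l-j)-1) * (2*((l-(l-j)+1 : ℕ):ℝ)) * u^(l-(l-j))
      = Cc l * ∑ j ∈ Finset.range l, Bc j * x^(l-1-j) * (2*((j:ℝ)+1)) * u^j := by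
    rw [Finset.mul_sum]
    refine Finset.sum_congr rfl fun j hj => ?_
    rw [Finset.mem_range] at hj
    rw [hAB j hj, show (l-j)-1 = l-1-j by omega, show l-(l-j)+1 = j+1 by omega,
        show l-(l-j) = j by omega]
    push_cast
    ring
  rw [h1, h2]
  have hcomb : (∑ j ∈ Finset.range l, Bc j * x^(l-1-j) * u^(j+1))
      + (x-u) * ∑ j ∈ Finset.range l, Bc j * x^(l-1-j) * (2*((j:ℝ)+1)) * u^j
      = x^l - 2*((l:ℝ)+1)*Bc l * u^l := by
    rw [Finset.mul_sum, ← Finset.sum_add_distrib, ← key_sum l x u]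
    refine Finset.sum_congr rfl fun j hj => ?_
    rw [Finset.mem_range] at hj
    have hx : x^(l-j) = x^(l-1-j) * x := by
      rw [← pow_succ]
      congr 1
      omega
    rw [hx]
    ring
  have hCB := CBl l
  linear_combination (-(Cc l)) * hcomb + (u^l) * hCB

noncomputable def Phi (l : ℕ) (htilde : ℝ → ℝ) (x s : ℝ) : ℝ :=
  htilde x * s - Cc l * ((∑ i ∈ Finset.Icc 1 l, Ai l i * x^(i-1) * (x - s^2)^(l-i+1)) - x^l)

noncomputable def P2 (l : ℕ) (htilde : ℝ → ℝ) (x s : ℝ) : ℝ :=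
  htilde x + ∑ i ∈ Finset.Icc 1 l,
    Cc l * Ai l i * x^(i-1) * (2*((l-i+1 : ℕ):ℝ)) * ((x - s^2)^(l-i) * s)

noncomputable def P22 (l : ℕ) (x s : ℝ) : ℝ :=
  ∑ i ∈ Finset.Icc 1 l,
    Cc l * Ai l i * x^(i-1) * (2*((l-i+1 : ℕ):ℝ)) *
      ((x - s^2)^(l-i) - 2*s^2*((l-i : ℕ):ℝ)*(x - s^2)^(l-i-1))

lemma hasDerivAt_Phi2 (l : ℕ) (htilde : ℝ → ℝ) (x s : ℝ) :
    HasDerivAt (fun t => Phi l htilde x t) (P2 l htilde x s) s := by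
  have hterm : ∀ i ∈ Finset.Icc 1 l,
      HasDerivAt (fun t : ℝ => Ai l i * x^(i-1) * (x - t^2)^(l-i+1))
        (Ai l i * x^(i-1) * (↑(l-i+1) * (x - s^2)^(l-i+1-1) * (-(↑2 * s^(2-1))))) s :=
    fun i _ => (((hasDerivAt_pow 2 s).const_sub x).pow (l-i+1)).const_mul (Ai l i * x^(i-1))
  have hsum := HasDerivAt.fun_sum hterm
  have h1 : HasDerivAt (fun t : ℝ => htilde x * t) (htilde x) s := by
    simpa using (hasDerivAt_id s).const_mul (htilde x)
  have h2 := h1.sub ((hsum.sub_const (x^l)).const_mul (Cc l))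
  have h3 : (fun t => Phi l htilde x t)
      = fun t => htilde x * t - Cc l * ((∑ i ∈ Finset.Icc 1 l, Ai l i * x^(i-1) * (x - t^2)^(l-i+1)) - x^l) := rfl
  rw [h3]
  convert h2 using 1
  · rfl
  · rfl
  · rfl
  unfold P2
  have hv : Cc l * (∑ i ∈ Finset.Icc 1 l,
        Ai l i * x^(i-1) * (↑(l-i+1) * (x - s^2)^(l-i+1-1) * (-(↑2 * s^(2-1)))))
      = - ∑ i ∈ Finset.Icc 1 l,
        Cc l * Ai l i * x^(i-1) * (2*((l-i+1 : ℕ):ℝ)) * ((x - s^2)^(l-i) * s) := by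
    rw [Finset.mul_sum, ← Finset.sum_neg_distrib]
    refine Finset.sum_congr rfl fun i hi => ?_
    rw [show l - i + 1 - 1 = l - i by omega]
    push_cast
    ring
  rw [hv, sub_neg_eq_add]

lemma hasDerivAt_P2 (l : ℕ) (htilde : ℝ → ℝ) (x s : ℝ) :
    HasDerivAt (fun t => P2 l htilde x t) (P22 l x s) s := by
  have hterm : ∀ i ∈ Finset.Icc 1 l,
      HasDerivAt (fun t : ℝ => Cc l * Ai l i * x^(i-1) * (2*((l-i+1 : ℕ):ℝ)) * ((x - t^2)^(l-i) * t))
        (Cc l * Ai l i * x^(i-1) * (2*((l-i+1 : ℕ):ℝ)) *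
          ((↑(l-i) * (x - s^2)^(l-i-1) * (-(↑2 * s^(2-1)))) * s + (x - s^2)^(l-i) * 1)) s :=
    fun i _ =>
      ((((hasDerivAt_pow 2 s).const_sub x).pow (l-i)).mul (hasDerivAt_id' s)).const_mul _
  have hsum := (HasDerivAt.fun_sum hterm).const_add (htilde x)
  have h3 : (fun t => P2 l htilde x t)
      = fun t => htilde x + ∑ i ∈ Finset.Icc 1 l,
          Cc l * Ai l i * x^(i-1) * (2*((l-i+1 : ℕ):ℝ)) * ((x - t^2)^(l-i) * t) := rfl
  rw [h3]
  convert hsum using 1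
  · rfl
  · rfl
  unfold P22
  refine Finset.sum_congr rfl fun i hi => ?_
  push_cast
  ring

lemma cont_P22 (l : ℕ) (x : ℝ) : Continuous (fun s => P22 l x s) := by
  unfold P22
  fun_prop

lemma diff_Phi1 (l : ℕ) (htilde : ℝ → ℝ) (hh : Differentiable ℝ htilde) (s : ℝ) :
    Differentiable ℝ (fun t => Phi l htilde t s) := by
  unfold Phi
  fun_prop

lemma diff_P21 (l : ℕ) (htilde : ℝ → ℝ) (hh : Differentiable ℝ htilde) (s : ℝ) :
    Differentiable ℝ (fun t => P2 l htilde t s) := by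
  unfold P2
  fun_prop

/-- Example 6.1(b) with f = 0: the polynomial family
φ = h̃(x)s − [(2l)!!/(2l−1)!!]·[Σᵢ ((2l−2i−1)!!/(2l−2i+2)!!)x^{i−1}(x−s²)^{l−i+1} − x^l]
satisfies φ₂₂ − 2(φ₁ − sφ₁₂) = 0 and φ − sφ₂ = (x−s²)^l. -/
theorem stmt_13 (l : ℕ) (hl : 1 ≤ l) (htilde : ℝ → ℝ)
    (hht : ContDiff ℝ (⊤ : ℕ∞) htilde) (φ : ℝ → ℝ → ℝ)
    (hφ : ∀ x s : ℝ, φ x s = htilde x * s -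
      ((dfac (2 * l) : ℝ) / (dfac (2 * l - 1))) *
        ((∑ i ∈ Finset.Icc 1 l,
          ((dfac (2 * l - 2 * i - 1) : ℝ) / (dfac (2 * l - 2 * i + 2))) *
            x ^ (i - 1) * (x - s ^ 2) ^ (l - i + 1)) - x ^ l)) :
    ∀ x s : ℝ,
      (d2 (d2 φ) x s - 2 * (d1 φ x s - s * d1 (d2 φ) x s) = 0) ∧
      φ x s - s * d2 φ x s = (x - s ^ 2) ^ l := by
  have hΦ : φ = Phi l htilde := by
    funext a b
    rw [hφ]
    rfl
  have hhd : Differentiable ℝ htilde := hht.differentiable (by simp)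
  -- second derivative in s
  have hd2 : d2 (Phi l htilde) = P2 l htilde := by
    funext a b
    exact (hasDerivAt_Phi2 l htilde a b).deriv
  -- part 2 (pointwise, for the explicit functions)
  have hpart2 : ∀ a b : ℝ, Phi l htilde a b - b * P2 l htilde a b = (a - b^2)^l := by
    intro a b
    have hk := key_identity l a (a - b^2)
    rw [show a - (a - b^2) = b^2 by ring] at hk
    have hs : ∑ i ∈ Finset.Icc 1 l,
          Cc l * Ai l i * a^(i-1) * (2*((l-i+1 : ℕ):ℝ)) * ((a - b^2)^(l-i) * b)
        = (∑ i ∈ Finset.Icc 1 l,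
            Cc l * Ai l i * a^(i-1) * (2*((l-i+1 : ℕ):ℝ)) * (a - b^2)^(l-i)) * b := by
      rw [Finset.sum_mul]
      exact Finset.sum_congr rfl fun i _ => by ring
    show htilde a * b - Cc l * ((∑ i ∈ Finset.Icc 1 l,
        Ai l i * a^(i-1) * (a - b^2)^(l-i+1)) - a^l)
      - b * (htilde a + ∑ i ∈ Finset.Icc 1 l,
        Cc l * Ai l i * a^(i-1) * (2*((l-i+1 : ℕ):ℝ)) * ((a - b^2)^(l-i) * b)) = (a - b^2)^l
    rw [hs]
    linear_combination hk
  -- φ₂₂ = 2 l (x - s²)^(l-1)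
  have hP22val : ∀ a b : ℝ, P22 l a b = 2*(l:ℝ)*(a - b^2)^(l-1) := by
    intro a
    have hzero : ∀ b : ℝ, b * (P22 l a b - 2*(l:ℝ)*(a - b^2)^(l-1)) = 0 := by
      intro b
      have h1 : HasDerivAt (fun t => Phi l htilde a t - t * P2 l htilde a t)
          (P2 l htilde a b - (1 * P2 l htilde a b + b * P22 l a b)) b :=
        (hasDerivAt_Phi2 l htilde a b).sub
          ((hasDerivAt_id' b).mul (hasDerivAt_P2 l htilde a b))
      have h2 : HasDerivAt (fun t : ℝ => (a - t^2)^l)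
          (↑l * (a - b^2)^(l-1) * (-(↑2 * b^(2-1)))) b :=
        ((hasDerivAt_pow 2 b).const_sub a).pow l
      have heq : (fun t => Phi l htilde a t - t * P2 l htilde a t)
          = (fun t : ℝ => (a - t^2)^l) := funext fun t => hpart2 a t
      rw [heq] at h1
      have hu := h1.unique h2
      push_cast at hu
      linear_combination -hu
    have hfun : Set.EqOn (fun b => P22 l a b - 2*(l:ℝ)*(a - b^2)^(l-1))
        (fun _ => (0:ℝ)) ({0}ᶜ : Set ℝ) := by
      intro b hb
      have hb' : b ≠ 0 := hb
      rcases mul_eq_zero.mp (hzero b) with h | h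
      · exact absurd h hb'
      · exact h
    have hcont : Continuous (fun b => P22 l a b - 2*(l:ℝ)*(a - b^2)^(l-1)) := by
      have := cont_P22 l a
      fun_prop
    have hext := Continuous.ext_on (dense_compl_singleton (0:ℝ)) hcont continuous_const hfun
    intro b
    have := congrFun hext b
    linarith [this]
  -- φ₁ - s φ₁₂ = l (x - s²)^(l-1)
  have hd1comb : ∀ a b : ℝ,
      d1 (Phi l htilde) a b - b * d1 (P2 l htilde) a b = (l:ℝ) * (a - b^2)^(l-1) := by
    intro a b
    have hD : deriv (fun t => Phi l htilde t b - b * P2 l htilde t b) a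
        = d1 (Phi l htilde) a b - b * d1 (P2 l htilde) a b := by
      rw [deriv_fun_sub (diff_Phi1 l htilde hhd b a)
          ((diff_P21 l htilde hhd b a).const_mul b),
        deriv_const_mul b (diff_P21 l htilde hhd b a)]
      rfl
    have hfun2 : (fun t => Phi l htilde t b - b * P2 l htilde t b)
        = fun t : ℝ => (t - b^2)^l := funext fun t => hpart2 t b
    rw [hfun2] at hD
    have hd' : deriv (fun t : ℝ => (t - b^2)^l) a = (l:ℝ) * (a - b^2)^(l-1) := by
      have h := (((hasDerivAt_id' a).sub_const (b^2)).pow l)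
      simpa using h.deriv
    rw [hd'] at hD
    exact hD.symm
  intro x s
  rw [hΦ]
  constructor
  · rw [hd2]
    have h22 : d2 (P2 l htilde) x s = P22 l x s := (hasDerivAt_P2 l htilde x s).deriv
    rw [h22, hP22val x s, hd1comb x s]
    ring
  · rw [hd2]
    exact hpart2 x s
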